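/- arXiv:2005.01671 — 4 statements merged into one kernel-verified Lean document; each statement's English description precedes it below -/
import Mathlib

section
/- For every x ∈ ℝⁿ and u ∈ ℝᵐ, writing x̃ = x − x*, ũ = u − u* and ỹ = G_N(x*)ᵀQx̃, the following power-balance identity holds: x̃ᵀQ[(J₀ + Σᵢ₌₁ᵐ Jᵢuᵢ − R)Qx + (G₀ + Σᵢ₌₁ᵐ Gᵢuᵢ)E] = −x̃ᵀQRQx̃ + ỹᵀũ. (In particular the map ũ ↦ ỹ is shifted passive for the converter with storage function ½x̃ᵀQx̃.) -/
/-!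
Subtracting the equilibrium equation from the vector field leaves
`(J(u) − R) Q x̃ + Σᵢ ũᵢ (Jᵢ Q x* + Gᵢ E)`, where `J(u) = J₀ + Σᵢ uᵢ Jᵢ`; the `ũ`-part is exactly
`G_N(x*) ũ`. Pairing with `Q x̃`, the skew-symmetric `J(u)` does no work, the dissipation gives
`−x̃ᵀQRQx̃`, and the symmetry of `Q` turns `(Q x̃)ᵀ G_N(x*) ũ` into `ỹᵀũ`.
-/

open Matrix

namespace Matrix

variable {ι n α : Type*} [Fintype ι] [Fintype n]

theorem IsSymm.dotProduct_mulVec_comm [CommSemiring α] {Q : Matrix n n α} (hQ : Q.IsSymm)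
    (v w : n → α) : v ⬝ᵥ Q *ᵥ w = Q *ᵥ v ⬝ᵥ w := by
  rw [dotProduct_mulVec, ← mulVec_transpose, hQ.eq]

theorem dotProduct_mulVec_self_eq_zero_of_transpose_eq_neg [CommRing α] [IsAddTorsionFree α]
    {S : Matrix n n α} (hS : Sᵀ = -S) (v : n → α) : v ⬝ᵥ S *ᵥ v = 0 :=
  self_eq_neg.mp <| by
    conv_lhs => rw [dotProduct_mulVec, ← mulVec_transpose, hS, neg_mulVec, neg_dotProduct,
      dotProduct_comm]

omit [Fintype n] in
theorem transpose_add_sum_smul_eq_neg [CommRing α] {S₀ : Matrix n n α} {S : ι → Matrix n n α}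
    (hS₀ : S₀ᵀ = -S₀) (hS : ∀ i, (S i)ᵀ = -S i) (c : ι → α) :
    (S₀ + ∑ i, c i • S i)ᵀ = -(S₀ + ∑ i, c i • S i) := by
  simp only [transpose_add, transpose_sum, transpose_smul, hS₀, hS, smul_neg,
    Finset.sum_neg_distrib, neg_add]

omit [Fintype n] in
theorem of_mulVec_eq_sum_smul [CommSemiring α] (c : ι → n → α) (v : ι → α) :
    (of fun k i => c i k) *ᵥ v = ∑ i, v i • c i := by
  ext k
  simp [mulVec, dotProduct, Finset.sum_apply, mul_comm]

theorem controlAffine_field_sub [CommRing α] (A₀ R B₀ : Matrix n n α) (A B : ι → Matrix n n α)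
    (E z zs : n → α) (u us : ι → α) :
    ((A₀ + ∑ i, u i • A i - R) *ᵥ z + (B₀ + ∑ i, u i • B i) *ᵥ E)
        - ((A₀ + ∑ i, us i • A i - R) *ᵥ zs + (B₀ + ∑ i, us i • B i) *ᵥ E)
      = (A₀ + ∑ i, u i • A i - R) *ᵥ (z - zs) + ∑ i, (u i - us i) • (A i *ᵥ zs + B i *ᵥ E) := by
  simp only [add_mulVec, sub_mulVec, mulVec_sub, sum_mulVec, smul_mulVec, sub_smul, smul_add,
    Finset.sum_sub_distrib, Finset.sum_add_distrib]
  abel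

end Matrix

theorem shifted_passivity_power_balance_general {n m : ℕ}
    (J₀ : Matrix (Fin n) (Fin n) ℝ) (J : Fin m → Matrix (Fin n) (Fin n) ℝ)
    (R Q G₀ : Matrix (Fin n) (Fin n) ℝ) (G : Fin m → Matrix (Fin n) (Fin n) ℝ)
    (E : Fin n → ℝ) (xs : Fin n → ℝ) (us : Fin m → ℝ)
    (hJ₀ : J₀ᵀ = -J₀) (hJ : ∀ i, (J i)ᵀ = -(J i))
    (hQdiag : Q.IsDiag)
    -- admissible equilibrium
    (heq : 0 = (J₀ + ∑ i, us i • J i - R).mulVec (Q.mulVec xs)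
            + (G₀ + ∑ i, us i • G i).mulVec E)
    -- G_N(x) : n × m matrix whose i-th column is JᵢQx + GᵢE
    (GN : (Fin n → ℝ) → Matrix (Fin n) (Fin m) ℝ)
    (hGN : ∀ z, GN z = Matrix.of fun k i => ((J i).mulVec (Q.mulVec z) + (G i).mulVec E) k)
    (x : Fin n → ℝ) (u : Fin m → ℝ) :
    (x - xs) ⬝ᵥ Q.mulVec
        ((J₀ + ∑ i, u i • J i - R).mulVec (Q.mulVec x) + (G₀ + ∑ i, u i • G i).mulVec E)
      = -((x - xs) ⬝ᵥ (Q * R * Q).mulVec (x - xs))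
        + ((GN xs)ᵀ.mulVec (Q.mulVec (x - xs))) ⬝ᵥ (u - us) := by
  have hQ := hQdiag.isSymm
  have hGN_mulVec : GN xs *ᵥ (u - us) = ∑ i, (u i - us i) • (J i *ᵥ (Q *ᵥ xs) + G i *ᵥ E) :=
    by rw [hGN, of_mulVec_eq_sum_smul]; rfl
  have hdissipation : (x - xs) ⬝ᵥ Q *ᵥ ((J₀ + ∑ i, u i • J i - R) *ᵥ (Q *ᵥ (x - xs)))
      = -((x - xs) ⬝ᵥ (Q * R * Q) *ᵥ (x - xs)) := by
    rw [hQ.dotProduct_mulVec_comm, sub_mulVec, dotProduct_sub,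
      dotProduct_mulVec_self_eq_zero_of_transpose_eq_neg (transpose_add_sum_smul_eq_neg hJ₀ hJ u),
      ← mulVec_mulVec, ← mulVec_mulVec, hQ.dotProduct_mulVec_comm, zero_sub]
  have hsupply : (x - xs) ⬝ᵥ Q *ᵥ (GN xs *ᵥ (u - us))
      = (GN xs)ᵀ *ᵥ (Q *ᵥ (x - xs)) ⬝ᵥ (u - us) := by
    rw [hQ.dotProduct_mulVec_comm, dotProduct_comm, ← vecMul_transpose, ← dotProduct_mulVec,
      dotProduct_comm]
  rw [← sub_zero (_ + _), heq, controlAffine_field_sub, ← mulVec_sub, ← hGN_mulVec, mulVec_add,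
    dotProduct_add, hdissipation, hsupply]

/-- Power-balance identity / shifted passivity: with
`x̃ = x − x*`, `ũ = u − u*`, `ỹ = G_N(x*)ᵀ Q x̃`, one has
`x̃ᵀQ[(J₀ + Σ Jᵢuᵢ − R)Qx + (G₀ + Σ Gᵢuᵢ)E] = −x̃ᵀQRQx̃ + ỹᵀũ`. -/
theorem shifted_passivity_power_balance {n m : ℕ}
    (J₀ : Matrix (Fin n) (Fin n) ℝ) (J : Fin m → Matrix (Fin n) (Fin n) ℝ)
    (R Q G₀ : Matrix (Fin n) (Fin n) ℝ) (G : Fin m → Matrix (Fin n) (Fin n) ℝ)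
    (E : Fin n → ℝ) (xs : Fin n → ℝ) (us : Fin m → ℝ)
    (hJ₀ : J₀ᵀ = -J₀) (hJ : ∀ i, (J i)ᵀ = -(J i))
    (hR : R.PosDef) (hQ : Q.PosDef) (hQdiag : Q.IsDiag)
    -- admissible equilibrium
    (heq : 0 = (J₀ + ∑ i, us i • J i - R).mulVec (Q.mulVec xs)
            + (G₀ + ∑ i, us i • G i).mulVec E)
    -- G_N(x) : n × m matrix whose i-th column is JᵢQx + GᵢE
    (GN : (Fin n → ℝ) → Matrix (Fin n) (Fin m) ℝ)
    (hGN : ∀ z, GN z = Matrix.of fun k i => ((J i).mulVec (Q.mulVec z) + (G i).mulVec E) k)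
    (x : Fin n → ℝ) (u : Fin m → ℝ) :
    (x - xs) ⬝ᵥ Q.mulVec
        ((J₀ + ∑ i, u i • J i - R).mulVec (Q.mulVec x) + (G₀ + ∑ i, u i • G i).mulVec E)
      = -((x - xs) ⬝ᵥ (Q * R * Q).mulVec (x - xs))
        + ((GN xs)ᵀ.mulVec (Q.mulVec (x - xs))) ⬝ᵥ (u - us) :=
  shifted_passivity_power_balance_general J₀ J R Q G₀ G E xs us hJ₀ hJ hQdiag heq GN hGN x u
end

section
/- (Key finite-time identity.) Let γ > 0, Δ : ℝ≥0 → ℝ continuous, and θ ∈ ℝⁿ a constant vector. Suppose θ̂ : ℝ≥0 → ℝⁿ and ω : ℝ≥0 → ℝ are differentiable and satisfy θ̂̇(t) = γΔ(t)(Δ(t)θ − Δ(t)θ̂(t)) and ω̇(t) = −γΔ(t)²ω(t) with ω(0) = 1. Then ω(t) = exp(−γ∫₀ᵗΔ(s)²ds), ω is nonincreasing with 0 < ω(t) ≤ 1, and for all t ≥ 0 the identity (1 − ω(t))θ = θ̂(t) − ω(t)θ̂(0) holds. -/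
/-!
Both `ω` and the parameter error `θ̂ - θ` solve the same scalar linear equation `ẋ = -γΔ²x`.
Multiplying by the integrating factor `exp(γ∫₀ᵗΔ²)` makes each of them constant, so
`ω(t) = exp(-γ∫₀ᵗΔ²)` and `θ̂(t) - θ = ω(t)(θ̂(0) - θ)`, which rearranges to the identity.
-/

open Set

theorem eq_exp_neg_integral_smul_of_hasDerivAt {E : Type*} [NormedAddCommGroup E]
    [NormedSpace ℝ E] {a : ℝ → ℝ} (ha : Continuous a) {f : ℝ → E} {t₀ : ℝ}
    (hf : ∀ t ≥ t₀, HasDerivAt f (-a t • f t) t) (t : ℝ) (ht : t₀ ≤ t) :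
    f t = Real.exp (-∫ s in t₀..t, a s) • f t₀ := by
  set A : ℝ → ℝ := fun u => ∫ s in t₀..u, a s
  have hA : ∀ u, HasDerivAt A (a u) u := fun u =>
    (ha.integral_hasStrictDerivAt t₀ u).hasDerivAt
  have hconst : ∀ u ∈ Icc t₀ t, Real.exp (A u) • f u = Real.exp (A t₀) • f t₀ := by
    refine constant_of_has_deriv_right_zero (fun u hu => ?_) fun u hu => ?_
    · exact ((hA u).exp.continuousAt.smul (hf u hu.1).continuousAt).continuousWithinAt
    · refine (((hA u).exp.smul (hf u hu.1)).congr_deriv ?_).hasDerivWithinAt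
      module
  have hfinal := hconst t ⟨ht, le_rfl⟩
  simp only [A, intervalIntegral.integral_same, Real.exp_zero, one_smul] at hfinal
  rw [← hfinal, smul_smul, ← Real.exp_add, neg_add_cancel, Real.exp_zero, one_smul]

theorem monotone_integral_of_nonneg {a : ℝ → ℝ} (ha : Continuous a) (ha0 : ∀ s, 0 ≤ a s)
    (t₀ : ℝ) : Monotone fun t => ∫ s in t₀..t, a s := by
  intro u v huv
  dsimp only
  rw [← intervalIntegral.integral_add_adjacent_intervals (ha.intervalIntegrable t₀ u)
    (ha.intervalIntegrable u v)]
  exact le_add_of_nonneg_right (intervalIntegral.integral_nonneg huv fun s _ => ha0 s)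

/-- Key finite-time identity. If `θ̂̇ = γΔ(Δθ − Δθ̂)` and
`ω̇ = −γΔ²ω` with `ω(0) = 1`, then `ω(t) = exp(−γ∫₀ᵗΔ²)`, `ω` is nonincreasing with
`0 < ω(t) ≤ 1`, and `(1 − ω(t))θ = θ̂(t) − ω(t)θ̂(0)` for all `t ≥ 0`. -/
theorem drem_key_finite_time_identity {n : ℕ}
    (γ : ℝ) (hγ : 0 < γ) (Δ : ℝ → ℝ) (hΔ : Continuous Δ) (θ : Fin n → ℝ)
    (θh : ℝ → Fin n → ℝ) (ω : ℝ → ℝ)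
    (hθh : ∀ t ≥ (0:ℝ), HasDerivAt θh ((γ * Δ t) • (Δ t • θ - Δ t • θh t)) t)
    (hω : ∀ t ≥ (0:ℝ), HasDerivAt ω (-(γ * (Δ t) ^ 2) * ω t) t)
    (hω0 : ω 0 = 1) :
    (∀ t ≥ (0:ℝ), ω t = Real.exp (-(γ * ∫ s in (0:ℝ)..t, (Δ s) ^ 2)))
    ∧ AntitoneOn ω (Set.Ici 0)
    ∧ (∀ t ≥ (0:ℝ), 0 < ω t ∧ ω t ≤ 1)
    ∧ (∀ t ≥ (0:ℝ), (1 - ω t) • θ = θh t - ω t • θh 0) := by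
  have hrate : Continuous fun s => γ * Δ s ^ 2 := continuous_const.mul (hΔ.pow 2)
  have hω_exp : ∀ t ≥ (0:ℝ), ω t = Real.exp (-(γ * ∫ s in (0:ℝ)..t, (Δ s) ^ 2)) := by
    intro t ht
    rw [eq_exp_neg_integral_smul_of_hasDerivAt hrate (f := ω)
        (fun u hu => by simpa only [smul_eq_mul, neg_mul] using hω u hu) t ht, hω0, intervalIntegral.integral_const_mul, smul_eq_mul, mul_one]
  have hmono : Monotone fun t => γ * ∫ s in (0:ℝ)..t, (Δ s) ^ 2 :=
    (monotone_integral_of_nonneg (hΔ.pow 2) (fun s => sq_nonneg _) 0).const_mul hγ.le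
  refine ⟨hω_exp, fun u hu v hv huv => ?_, fun t ht => ?_, fun t ht => ?_⟩
  · rw [hω_exp u hu, hω_exp v hv]
    exact Real.exp_le_exp.2 (neg_le_neg (hmono huv))
  · rw [hω_exp t ht]
    refine ⟨Real.exp_pos _, Real.exp_le_one_iff.2 (neg_nonpos.2 ?_)⟩
    simpa using hmono ht
  · have herror : θh t - θ = ω t • (θh 0 - θ) := by
      rw [eq_exp_neg_integral_smul_of_hasDerivAt hrate (f := fun u => θh u - θ)
        (fun u hu => ?_) t ht, intervalIntegral.integral_const_mul, hω_exp t ht]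
      convert (hθh u hu).sub_const θ using 1
      module
    linear_combination (norm := module) -herror
end

section
/- (Proposition 2, FCT-GPEBO observer.) Consider the converter ẋ(t) = Λ(u(t))x(t) + (G₀ + Σᵢ₌₁ᵐ Gᵢuᵢ(t))E with Λ(u) := (J₀ + Σᵢ₌₁ᵐ Jᵢuᵢ − R)Q, continuous input u, measured output y_m(t) = Cx(t), C ∈ ℝ^{p×n}. Let λ > 0, γ > 0, μ ∈ (0,1), and let ξ, Φ, Y, Ω, ω, θ̂ be differentiable solutions of the observer: ξ̇ = Λ(u)ξ + (G₀ + Σᵢ₌₁ᵐ Gᵢuᵢ)E; Φ̇ = Λ(u)Φ, Φ(0) = Iₙ; Ẏ = −λY + λΦᵀCᵀ(y_m − Cξ), Y(0) = 0; Ω̇ = −λΩ + λΦᵀCᵀCΦ, Ω(0) = 0; ω̇ = −γΔ²ω, ω(0) = 1; θ̂̇ = γΔ(𝒴 − Δθ̂); where 𝒴 := adj{Ω}Y and Δ := det{Ω}. Define ω_c(t) := min{ω(t), 1 − μ}, θ̂_FCT(t) := (1/(1 − ω_c(t)))[θ̂(t) − ω_c(t)θ̂(0)] and x̂(t) := ξ(t)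 + Φ(t)θ̂_FCT(t). If there exists t_c > 0 with ∫₀^{t_c} Δ(s)²ds ≥ −(1/γ)ln(1 − μ), then x̂(t) = x(t) for all t ≥ t_c. -/
open Matrix Set

attribute [local instance] Matrix.normedAddCommGroup Matrix.normedSpace

/-!
Every estimation error of the observer obeys a linear ODE with a coefficient continuous on
`[0, ∞)`, so it is pinned down by its initial value. Thus `x - ξ = Φ θ` with `θ := x 0 - ξ 0`,
the filters give `Y = Ω θ`, hence `adj{Ω} Y = Δ θ`, and the gradient estimator satisfies
`θ̂ - θ = ω (θ̂ 0 - θ)` with `ω = exp (-γ ∫₀ᵗ Δ²)`. Excitation makes `ω ≤ 1 - μ` after `t_c`, where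
the clipping is inactive, and solving the last identity for `θ` gives `θ̂_FCT = θ`.
-/

theorem linearODE_eq_zero {E : Type*} [NormedAddCommGroup E] [NormedSpace ℝ E]
    {A : ℝ → E →L[ℝ] E} (hA : ContinuousOn A (Ici 0)) {z : ℝ → E}
    (hz : ∀ t ≥ 0, HasDerivAt z (A t (z t)) t) (hz0 : z 0 = 0) :
    ∀ t ≥ 0, z t = 0 := by
  intro T hT
  obtain ⟨K, hK⟩ := isCompact_Icc.exists_bound_of_continuousOn (hA.mono Icc_subset_Ici_self)
  refine ODE_solution_unique_of_mem_Icc_right (v := fun t y => A t y) (s := fun _ => univ)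
    (K := K.toNNReal) (g := fun _ => 0) (fun t ht => ?_)
    (HasDerivAt.continuousOn fun t ht => hz t ht.1)
    (fun t ht => (hz t ht.1).hasDerivWithinAt) (fun _ _ => trivial)
    continuousOn_const (fun t _ => by simpa using hasDerivWithinAt_const t (Ici t) (0 : E))
    (fun _ _ => trivial) hz0 ⟨hT, le_rfl⟩
  refine ((A t).lipschitz.weaken ?_).lipschitzOnWith
  rw [← NNReal.coe_le_coe, coe_nnnorm]
  exact (hK t (Ico_subset_Icc_self ht)).trans (Real.le_coe_toNNReal K)

theorem linearODE_smul_eq_zero {E : Type*} [NormedAddCommGroup E] [NormedSpace ℝ E]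
    {a : ℝ → ℝ} (ha : ContinuousOn a (Ici 0)) {z : ℝ → E}
    (hz : ∀ t ≥ 0, HasDerivAt z (a t • z t) t) (hz0 : z 0 = 0) :
    ∀ t ≥ 0, z t = 0 :=
  linearODE_eq_zero (A := fun t => a t • ContinuousLinearMap.id ℝ E)
    (ha.smul continuousOn_const) (by simpa using hz) hz0

theorem linearODE_mulVec_eq_zero {ι : Type*} [Fintype ι] [DecidableEq ι]
    {A : ℝ → Matrix ι ι ℝ} (hA : ContinuousOn A (Ici 0)) {z : ℝ → ι → ℝ}
    (hz : ∀ t ≥ 0, HasDerivAt z (A t *ᵥ z t) t) (hz0 : z 0 = 0) :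
    ∀ t ≥ 0, z t = 0 :=
  linearODE_eq_zero (A := fun t => LinearMap.toContinuousLinearMap (Matrix.toLin' (A t)))
    (continuousOn_clm_apply.2 fun y =>
      (continuous_id.matrix_mulVec continuous_const).comp_continuousOn hA)
    (by simpa using hz) hz0

theorem HasDerivAt.matrix_mulVec_const {ι κ : Type*} [Fintype ι] [Fintype κ]
    {Φ : ℝ → Matrix κ ι ℝ} {Φ' : Matrix κ ι ℝ} {t : ℝ} (h : HasDerivAt Φ Φ' t) (v : ι → ℝ) :
    HasDerivAt (fun s => Φ s *ᵥ v) (Φ' *ᵥ v) t := by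
  refine hasDerivAt_pi.2 fun i => ?_
  simpa [Matrix.mulVec, dotProduct] using HasDerivAt.fun_sum fun j (_ : j ∈ Finset.univ) =>
    (hasDerivAt_pi.1 (hasDerivAt_pi.1 h i) j).mul_const (v j)

theorem eq_mulVec_of_fundamental_matrix {ι : Type*} [Fintype ι] [DecidableEq ι]
    {A Φ : ℝ → Matrix ι ι ℝ} (hA : ContinuousOn A (Ici 0)) {e : ℝ → ι → ℝ}
    (he : ∀ t ≥ 0, HasDerivAt e (A t *ᵥ e t) t) (hΦ : ∀ t ≥ 0, HasDerivAt Φ (A t * Φ t) t)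
    (hΦ0 : Φ 0 = 1) : ∀ t ≥ 0, e t = Φ t *ᵥ e 0 := by
  have := linearODE_mulVec_eq_zero hA (z := fun t => e t - Φ t *ᵥ e 0) (fun t ht => by
    refine ((he t ht).sub ((hΦ t ht).matrix_mulVec_const (e 0))).congr_deriv ?_
    rw [mulVec_sub, mulVec_mulVec]) (by simp [hΦ0])
  exact fun t ht => sub_eq_zero.1 (this t ht)

theorem eq_mulVec_of_lowPass_filter {ι : Type*} [Fintype ι] {lam : ℝ} {θ : ι → ℝ}
    {Y : ℝ → ι → ℝ} {Ω M : ℝ → Matrix ι ι ℝ}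
    (hY : ∀ t ≥ 0, HasDerivAt Y (-(lam • Y t) + lam • (M t *ᵥ θ)) t)
    (hΩ : ∀ t ≥ 0, HasDerivAt Ω (-(lam • Ω t) + lam • M t) t) (h0 : Y 0 = Ω 0 *ᵥ θ) :
    ∀ t ≥ 0, Y t = Ω t *ᵥ θ := by
  have := linearODE_smul_eq_zero (a := fun _ => -lam) continuousOn_const
    (z := fun t => Y t - Ω t *ᵥ θ) (fun t ht => by
      refine ((hY t ht).sub ((hΩ t ht).matrix_mulVec_const θ)).congr_deriv ?_
      rw [add_mulVec, neg_mulVec, smul_mulVec, smul_mulVec]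
      module) (sub_eq_zero.2 h0)
  exact fun t ht => sub_eq_zero.1 (this t ht)

theorem sub_eq_smul_of_hasDerivAt_gradient {E : Type*} [NormedAddCommGroup E] [NormedSpace ℝ E]
    {a ω : ℝ → ℝ} (ha : ContinuousOn a (Ici 0)) {θ : E} {θh : ℝ → E}
    (hθh : ∀ t ≥ 0, HasDerivAt θh (-a t • (θh t - θ)) t)
    (hω : ∀ t ≥ 0, HasDerivAt ω (-a t * ω t) t) (hω0 : ω 0 = 1) :
    ∀ t ≥ 0, θh t - θ = ω t • (θh 0 - θ) := by
  have := linearODE_smul_eq_zero (a := fun t => -a t) ha.neg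
    (z := fun t => θh t - θ - ω t • (θh 0 - θ)) (fun t ht => by
      refine (((hθh t ht).sub_const θ).sub ((hω t ht).smul_const (θh 0 - θ))).congr_deriv ?_
      module) (by simp [hω0])
  exact fun t ht => sub_eq_zero.1 (this t ht)

theorem eq_exp_neg_integral_of_hasDerivAt {f ω : ℝ → ℝ} (hf : ContinuousOn f (Ici 0))
    (hω : ∀ t ≥ 0, HasDerivAt ω (-f t * ω t) t) (hω0 : ω 0 = 1) :
    ∀ t ≥ 0, ω t = Real.exp (-∫ s in (0:ℝ)..t, f s) := by
  -- `f ∘ max · 0` is continuous on all of `ℝ`, so its primitive is differentiable at `0` as well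
  set g : ℝ → ℝ := fun s => f (max s 0)
  have hg : Continuous g := hf.comp_continuous (continuous_id.max continuous_const)
    fun s => le_max_right s 0
  have hg_eq : ∀ s ≥ 0, g s = f s := fun s hs => by simp [g, max_eq_left hs]
  have hF : ∀ t, HasDerivAt (fun t => ∫ s in (0:ℝ)..t, g s) (g t) t := fun t =>
    hg.integral_hasStrictDerivAt 0 t |>.hasDerivAt
  have hF_eq : ∀ t ≥ 0, ∫ s in (0:ℝ)..t, g s = ∫ s in (0:ℝ)..t, f s := fun t ht =>
    intervalIntegral.integral_congr fun s hs => hg_eq s (by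
      rw [uIcc_of_le ht] at hs; exact hs.1)
  have := linearODE_smul_eq_zero (a := fun t => -f t) hf.neg
    (z := fun t => ω t - Real.exp (-∫ s in (0:ℝ)..t, g s)) (fun t ht => by
      refine ((hω t ht).sub (hF t).fun_neg.exp).congr_deriv ?_
      rw [hg_eq t ht, smul_eq_mul]
      ring) (by simp [hω0])
  intro t ht
  rw [← hF_eq t ht]
  exact sub_eq_zero.1 (this t ht)

theorem le_one_sub_of_integral_sq_ge {γ μ tc : ℝ} {Δ ω : ℝ → ℝ} (hγ : 0 < γ) (hμ : μ < 1)
    (htc : 0 ≤ tc) (hΔ : ContinuousOn Δ (Ici 0))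
    (hω : ∀ t ≥ 0, HasDerivAt ω (-(γ * Δ t ^ 2) * ω t) t) (hω0 : ω 0 = 1)
    (hexc : -(1 / γ) * Real.log (1 - μ) ≤ ∫ s in (0:ℝ)..tc, Δ s ^ 2) :
    ∀ t ≥ tc, ω t ≤ 1 - μ := by
  intro t ht
  have hmono : ∫ s in (0:ℝ)..tc, Δ s ^ 2 ≤ ∫ s in (0:ℝ)..t, Δ s ^ 2 :=
    intervalIntegral.integral_mono_interval le_rfl htc ht
      (Filter.Eventually.of_forall fun s => sq_nonneg (Δ s))
      ((hΔ.pow 2).mono Icc_subset_Ici_self |>.intervalIntegrable_of_Icc (htc.trans ht))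
  have hlog : -(γ * ∫ s in (0:ℝ)..t, Δ s ^ 2) ≤ Real.log (1 - μ) := by
    have := mul_le_mul_of_nonneg_left (hexc.trans hmono) hγ.le
    rw [← mul_assoc, mul_neg, mul_one_div_cancel hγ.ne', neg_one_mul] at this
    linarith
  calc ω t = Real.exp (-(γ * ∫ s in (0:ℝ)..t, Δ s ^ 2)) := by
        rw [eq_exp_neg_integral_of_hasDerivAt (f := fun t => γ * Δ t ^ 2)
          (continuousOn_const.mul (hΔ.pow 2)) hω hω0 t (htc.trans ht),
          intervalIntegral.integral_const_mul]
    _ ≤ Real.exp (Real.log (1 - μ)) := Real.exp_le_exp.2 hlog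
    _ = 1 - μ := Real.exp_log (by linarith)

theorem inv_one_sub_smul_sub_smul_eq {E : Type*} [AddCommGroup E] [Module ℝ E] {w : ℝ}
    (hw : w ≠ 1) {θ θh θh₀ : E} (h : θh - θ = w • (θh₀ - θ)) :
    (1 - w)⁻¹ • (θh - w • θh₀) = θ := by
  have hw' : 1 - w ≠ 0 := sub_ne_zero.2 hw.symm
  rw [inv_smul_eq_iff₀ hw', ← sub_add_cancel θh θ, h]
  module

theorem fct_gpebo_observer_general {n m p : ℕ}
    (J₀ : Matrix (Fin n) (Fin n) ℝ) (J : Fin m → Matrix (Fin n) (Fin n) ℝ)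
    (R Q G₀ : Matrix (Fin n) (Fin n) ℝ) (G : Fin m → Matrix (Fin n) (Fin n) ℝ)
    (E : Fin n → ℝ)
    -- Λ(u) = (J₀ + Σ Jᵢuᵢ − R)Q
    (Λ : (Fin m → ℝ) → Matrix (Fin n) (Fin n) ℝ)
    (hΛ : ∀ v, Λ v = (J₀ + ∑ i, v i • J i - R) * Q)
    -- plant, continuous input, measured output
    (u : ℝ → Fin m → ℝ) (hu : Continuous u)
    (C : Matrix (Fin p) (Fin n) ℝ)
    (x : ℝ → Fin n → ℝ)
    (hx : ∀ t ≥ (0:ℝ), HasDerivAt x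
      ((Λ (u t)).mulVec (x t) + (G₀ + ∑ i, u t i • G i).mulVec E) t)
    (ym : ℝ → Fin p → ℝ) (hym : ∀ t, ym t = C.mulVec (x t))
    -- observer tuning parameters
    (lam γ μ : ℝ) (hγ : 0 < γ) (hμ : μ ∈ Set.Ioo (0:ℝ) 1)
    -- observer states
    (ξ : ℝ → Fin n → ℝ) (Φ Ω : ℝ → Matrix (Fin n) (Fin n) ℝ)
    (Y : ℝ → Fin n → ℝ) (ω : ℝ → ℝ) (θh : ℝ → Fin n → ℝ)
    -- 𝒴 = adj{Ω}Y and Δ = det{Ω}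
    (Δ : ℝ → ℝ) (hΔ : ∀ t, Δ t = (Ω t).det)
    (Ycal : ℝ → Fin n → ℝ) (hYcal : ∀ t, Ycal t = (Ω t).adjugate.mulVec (Y t))
    -- observer dynamics
    (hξ : ∀ t ≥ (0:ℝ), HasDerivAt ξ
      ((Λ (u t)).mulVec (ξ t) + (G₀ + ∑ i, u t i • G i).mulVec E) t)
    (hΦ : ∀ t ≥ (0:ℝ), HasDerivAt Φ (Λ (u t) * Φ t) t) (hΦ0 : Φ 0 = 1)
    (hY : ∀ t ≥ (0:ℝ), HasDerivAt Y
      (-(lam • Y t) + lam • ((Φ t)ᵀ * Cᵀ).mulVec (ym t - C.mulVec (ξ t))) t)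
    (hY0 : Y 0 = 0)
    (hΩ : ∀ t ≥ (0:ℝ), HasDerivAt Ω
      (-(lam • Ω t) + lam • ((Φ t)ᵀ * Cᵀ * C * Φ t)) t)
    (hΩ0 : Ω 0 = 0)
    (hω : ∀ t ≥ (0:ℝ), HasDerivAt ω (-(γ * (Δ t) ^ 2) * ω t) t) (hω0 : ω 0 = 1)
    (hθh : ∀ t ≥ (0:ℝ), HasDerivAt θh ((γ * Δ t) • (Ycal t - Δ t • θh t)) t)
    -- clipping and the FCT estimate
    (ωc : ℝ → ℝ) (hωc : ∀ t, ωc t = min (ω t) (1 - μ))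
    (θFCT : ℝ → Fin n → ℝ)
    (hθFCT : ∀ t, θFCT t = (1 - ωc t)⁻¹ • (θh t - ωc t • θh 0))
    (xh : ℝ → Fin n → ℝ) (hxh : ∀ t, xh t = ξ t + (Φ t).mulVec (θFCT t))
    -- sufficient interval excitation (Assumption 1)
    (tc : ℝ) (htc : 0 < tc)
    (hexc : -(1 / γ) * Real.log (1 - μ) ≤ ∫ s in (0:ℝ)..tc, (Δ s) ^ 2) :
    ∀ t ≥ tc, xh t = x t := by
  obtain ⟨hμ0, hμ1⟩ := hμ
  set θ := x 0 - ξ 0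
  have hΛu : ContinuousOn (fun t => Λ (u t)) (Ici 0) := by
    simp_rw [hΛ]
    fun_prop
  have hΔc : ContinuousOn Δ (Ici 0) := by
    rw [funext hΔ]
    exact fun t ht => (continuous_id.matrix_det.continuousAt.comp
      (hΩ t ht).continuousAt).continuousWithinAt
  have hxξ : ∀ t ≥ 0, x t - ξ t = Φ t *ᵥ θ :=
    eq_mulVec_of_fundamental_matrix hΛu (fun t ht =>
      ((hx t ht).sub (hξ t ht)).congr_deriv (by rw [mulVec_sub]; abel)) hΦ hΦ0
  have hYΩ : ∀ t ≥ 0, Y t = Ω t *ᵥ θ :=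
    eq_mulVec_of_lowPass_filter (fun t ht => (hY t ht).congr_deriv (by
      rw [hym, ← mulVec_sub, hxξ t ht, mulVec_mulVec, mulVec_mulVec, Matrix.mul_assoc,
        Matrix.mul_assoc])) hΩ (by simp [hY0, hΩ0])
  have hθθh : ∀ t ≥ 0, θh t - θ = ω t • (θh 0 - θ) :=
    sub_eq_smul_of_hasDerivAt_gradient (a := fun t => γ * Δ t ^ 2)
      (continuousOn_const.mul (hΔc.pow 2)) (fun t ht => (hθh t ht).congr_deriv (by
        rw [hYcal, hYΩ t ht, mulVec_mulVec, adjugate_mul, ← hΔ, smul_mulVec, one_mulVec]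
        module)) hω hω0
  have hω_le := le_one_sub_of_integral_sq_ge hγ hμ1 htc.le hΔc hω hω0 hexc
  intro t ht
  have ht0 : 0 ≤ t := htc.le.trans ht
  rw [hxh, hθFCT, hωc, min_eq_left (hω_le t ht),
    inv_one_sub_smul_sub_smul_eq (by linarith [hω_le t ht]) (hθθh t ht0), ← hxξ t ht0]
  abel

/-- Proposition 2, FCT-GPEBO observer. Under the interval-excitation
assumption `∫₀^{t_c}Δ² ≥ −(1/γ)ln(1 − μ)`, the GPEBO+DREM observer reconstructs the
converter state in finite time: `x̂(t) = x(t)` for all `t ≥ t_c`. -/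
theorem fct_gpebo_observer {n m p : ℕ}
    (J₀ : Matrix (Fin n) (Fin n) ℝ) (J : Fin m → Matrix (Fin n) (Fin n) ℝ)
    (R Q G₀ : Matrix (Fin n) (Fin n) ℝ) (G : Fin m → Matrix (Fin n) (Fin n) ℝ)
    (E : Fin n → ℝ)
    (hJ₀ : J₀ᵀ = -J₀) (hJ : ∀ i, (J i)ᵀ = -(J i))
    (hR : R.PosDef) (hQ : Q.PosDef) (hQdiag : Q.IsDiag)
    -- Λ(u) = (J₀ + Σ Jᵢuᵢ − R)Q
    (Λ : (Fin m → ℝ) → Matrix (Fin n) (Fin n) ℝ)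
    (hΛ : ∀ v, Λ v = (J₀ + ∑ i, v i • J i - R) * Q)
    -- plant, continuous input, measured output
    (u : ℝ → Fin m → ℝ) (hu : Continuous u)
    (C : Matrix (Fin p) (Fin n) ℝ)
    (x : ℝ → Fin n → ℝ)
    (hx : ∀ t ≥ (0:ℝ), HasDerivAt x
      ((Λ (u t)).mulVec (x t) + (G₀ + ∑ i, u t i • G i).mulVec E) t)
    (ym : ℝ → Fin p → ℝ) (hym : ∀ t, ym t = C.mulVec (x t))
    -- observer tuning parameters
    (lam γ μ : ℝ) (hlam : 0 < lam) (hγ : 0 < γ) (hμ : μ ∈ Set.Ioo (0:ℝ) 1)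
    -- observer states
    (ξ : ℝ → Fin n → ℝ) (Φ Ω : ℝ → Matrix (Fin n) (Fin n) ℝ)
    (Y : ℝ → Fin n → ℝ) (ω : ℝ → ℝ) (θh : ℝ → Fin n → ℝ)
    -- 𝒴 = adj{Ω}Y and Δ = det{Ω}
    (Δ : ℝ → ℝ) (hΔ : ∀ t, Δ t = (Ω t).det)
    (Ycal : ℝ → Fin n → ℝ) (hYcal : ∀ t, Ycal t = (Ω t).adjugate.mulVec (Y t))
    -- observer dynamics
    (hξ : ∀ t ≥ (0:ℝ), HasDerivAt ξ
      ((Λ (u t)).mulVec (ξ t) + (G₀ + ∑ i, u t i • G i).mulVec E) t)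
    (hΦ : ∀ t ≥ (0:ℝ), HasDerivAt Φ (Λ (u t) * Φ t) t) (hΦ0 : Φ 0 = 1)
    (hY : ∀ t ≥ (0:ℝ), HasDerivAt Y
      (-(lam • Y t) + lam • ((Φ t)ᵀ * Cᵀ).mulVec (ym t - C.mulVec (ξ t))) t)
    (hY0 : Y 0 = 0)
    (hΩ : ∀ t ≥ (0:ℝ), HasDerivAt Ω
      (-(lam • Ω t) + lam • ((Φ t)ᵀ * Cᵀ * C * Φ t)) t)
    (hΩ0 : Ω 0 = 0)
    (hω : ∀ t ≥ (0:ℝ), HasDerivAt ω (-(γ * (Δ t) ^ 2) * ω t) t) (hω0 : ω 0 = 1)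
    (hθh : ∀ t ≥ (0:ℝ), HasDerivAt θh ((γ * Δ t) • (Ycal t - Δ t • θh t)) t)
    -- clipping and the FCT estimate
    (ωc : ℝ → ℝ) (hωc : ∀ t, ωc t = min (ω t) (1 - μ))
    (θFCT : ℝ → Fin n → ℝ)
    (hθFCT : ∀ t, θFCT t = (1 - ωc t)⁻¹ • (θh t - ωc t • θh 0))
    (xh : ℝ → Fin n → ℝ) (hxh : ∀ t, xh t = ξ t + (Φ t).mulVec (θFCT t))
    -- sufficient interval excitation (Assumption 1)
    (tc : ℝ) (htc : 0 < tc)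
    (hexc : -(1 / γ) * Real.log (1 - μ) ≤ ∫ s in (0:ℝ)..tc, (Δ s) ^ 2) :
    ∀ t ≥ tc, xh t = x t :=
  fct_gpebo_observer_general J₀ J R Q G₀ G E Λ hΛ u hu C x hx ym hym lam γ μ hγ hμ ξ Φ Ω Y ω θh Δ hΔ
    Ycal hYcal hξ hΦ hΦ0 hY hY0 hΩ hΩ0 hω hω0 hθh ωc hωc θFCT hθFCT xh hxh tc htc hexc
end

section
/- (Exponential decay of the state transition matrix.) Let Jᵢ = −Jᵢᵀ ∈ ℝ^{n×n} (i = 0,…,m) be skew-symmetric, R = Rᵀ > 0, Q = Qᵀ > 0, u : ℝ≥0 → ℝᵐ continuous, and let Φ : ℝ≥0 → ℝ^{n×n} be differentiable with Φ̇(t) = (J₀ + Σᵢ₌₁ᵐ Jᵢuᵢ(t) − R)QΦ(t). Then U(t) := ½tr(Φ(t)ᵀQΦ(t)) satisfies U′(t) = −tr(Φ(t)ᵀQRQΦ(t)), and there exists c > 0, depending only on Q and R, such that U′(t) ≤ −cU(t) and hence tr(Φ(t)ᵀQΦ(t)) ≤ e^{−ct}tr(Φ(0)ᵀQΦ(0))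 for all t ≥ 0. In particular Φ(t) → 0 exponentially and Φ is bounded. -/
/-! With `V = tr(ΦᵀQΦ)` and `W = J₀ + Σ uᵢJᵢ`, the derivative is
`V' = 2 tr(ΦᵀQ(W - R)QΦ) = -2 tr(ΦᵀQRQΦ)`, because `tr(XᵀWX) = 0` for skew-symmetric `W`.
Since `QRQ` is positive definite, `c • Q ≤ QRQ` in the Loewner order for some `c > 0`, so
`V' ≤ -2cV` and `e^{2ct} V(t)` is antitone. Finally `r • 1 ≤ Q` bounds every entry of `Φ(t)`
by `√(V(t) / r)`. -/

open Matrix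

attribute [local instance] Matrix.normedAddCommGroup Matrix.normedSpace

open scoped MatrixOrder ComplexOrder
open Filter Topology

namespace Matrix

section Loewner

variable {𝕜 n : Type*} [RCLike 𝕜] [Fintype n] [DecidableEq n]

theorem PosDef.exists_pos_smul_one_le {A : Matrix n n 𝕜} (hA : A.PosDef) :
    ∃ r > (0 : ℝ), r • (1 : Matrix n n 𝕜) ≤ A := by
  cases isEmpty_or_nonempty n
  · exact ⟨1, one_pos, (Subsingleton.elim _ _).le⟩
  simp_rw [← Algebra.algebraMap_eq_smul_one]
  exact (CFC.exists_pos_algebraMap_le_iff hA.isHermitian).2 fun x hx =>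
    hA.isStrictlyPositive.spectrum_pos hx

theorem IsHermitian.exists_pos_le_smul_one {B : Matrix n n 𝕜} (hB : B.IsHermitian) :
    ∃ s > (0 : ℝ), B ≤ s • (1 : Matrix n n 𝕜) := by
  obtain ⟨s, hs⟩ := (finite_real_spectrum (A := B)).bddAbove
  refine ⟨max s 1, by positivity, ?_⟩
  rw [← Algebra.algebraMap_eq_smul_one, le_algebraMap_iff_spectrum_le hB]
  exact fun x hx => (hs hx).trans (le_max_left _ _)

theorem PosDef.exists_pos_smul_le {A B : Matrix n n 𝕜} (hA : A.PosDef) (hB : B.IsHermitian) :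
    ∃ c > (0 : ℝ), c • B ≤ A := by
  obtain ⟨r, hr, hrA⟩ := hA.exists_pos_smul_one_le
  obtain ⟨s, hs, hBs⟩ := hB.exists_pos_le_smul_one
  refine ⟨r / s, by positivity, ?_⟩
  calc (r / s) • B ≤ (r / s) • s • (1 : Matrix n n 𝕜) :=
        smul_le_smul_of_nonneg_left hBs (by positivity)
    _ = r • 1 := by rw [smul_smul, div_mul_cancel₀ r hs.ne']
    _ ≤ A := hrA

end Loewner

theorem trace_transpose_mul_mul_eq_zero_of_transpose_eq_neg {R m n : Type*} [CommRing R]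
    [NoZeroDivisors R] [CharZero R] [Fintype m] [Fintype n] {W : Matrix n n R}
    (hW : Wᵀ = -W) (X : Matrix n m R) : (Xᵀ * W * X).trace = 0 := by
  rw [← CharZero.eq_neg_self_iff, ← trace_neg, ← trace_transpose]
  simp [transpose_mul, hW, Matrix.mul_assoc]

section Real

variable {m n : Type*} [Fintype m] [Fintype n]

theorem trace_transpose_mul_mul_le_of_le {A B : Matrix n n ℝ} (hAB : A ≤ B) (X : Matrix n m ℝ) :
    (Xᵀ * A * X).trace ≤ (Xᵀ * B * X).trace := by
  have h := ((le_iff.1 hAB).conjTranspose_mul_mul_same X).trace_nonneg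
  rwa [conjTranspose_eq_transpose_of_trivial, Matrix.mul_sub, Matrix.sub_mul, trace_sub,
    sub_nonneg] at h

theorem sq_le_trace_transpose_mul_self (X : Matrix m n ℝ) (i : m) (j : n) :
    X i j ^ 2 ≤ (Xᵀ * X).trace := by
  have hcol : X i j ^ 2 ≤ ∑ k, X k j ^ 2 :=
    Finset.single_le_sum (f := fun k => X k j ^ 2) (fun _ _ => sq_nonneg _) (Finset.mem_univ i)
  have hsum : ∑ k, X k j ^ 2 ≤ ∑ l, ∑ k, X k l ^ 2 :=
    Finset.single_le_sum (f := fun l => ∑ k, X k l ^ 2)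
      (fun _ _ => Finset.sum_nonneg fun _ _ => sq_nonneg _) (Finset.mem_univ j)
  simpa [trace, mul_apply, sq] using hcol.trans hsum

theorem norm_sq_le_trace_transpose_mul_self (X : Matrix m n ℝ) : ‖X‖ ^ 2 ≤ (Xᵀ * X).trace := by
  have hX : ‖X‖ ≤ √(Xᵀ * X).trace :=
    (norm_le_iff (Real.sqrt_nonneg _)).2 fun i j =>
      Real.abs_le_sqrt (sq_le_trace_transpose_mul_self X i j)
  have h0 : 0 ≤ (Xᵀ * X).trace := by
    simpa using (posSemidef_conjTranspose_mul_self X).trace_nonneg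
  simpa [Real.sq_sqrt h0] using pow_le_pow_left₀ (norm_nonneg X) hX 2

theorem PosDef.exists_pos_mul_norm_sq_le_trace [DecidableEq n] {Q : Matrix n n ℝ}
    (hQ : Q.PosDef) :
    ∃ r > 0, ∀ X : Matrix n m ℝ, r * ‖X‖ ^ 2 ≤ (Xᵀ * Q * X).trace := by
  obtain ⟨r, hr, hrQ⟩ := hQ.exists_pos_smul_one_le
  refine ⟨r, hr, fun X => ?_⟩
  calc r * ‖X‖ ^ 2 ≤ r * (Xᵀ * X).trace :=
        mul_le_mul_of_nonneg_left (norm_sq_le_trace_transpose_mul_self X) hr.le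
    _ = (Xᵀ * (r • (1 : Matrix n n ℝ)) * X).trace := by simp
    _ ≤ (Xᵀ * Q * X).trace := trace_transpose_mul_mul_le_of_le hrQ X

theorem PosDef.exists_pos_mul_trace_le_trace_mul_mul [DecidableEq n] {R Q : Matrix n n ℝ}
    (hR : R.PosDef) (hQ : Q.PosDef) :
    ∃ c > 0, ∀ X : Matrix n m ℝ, c * (Xᵀ * Q * X).trace ≤ (Xᵀ * Q * R * Q * X).trace := by
  have hQt : Qᵀ = Q := by simpa using hQ.isHermitian.eq
  have hQRQ : (Q * R * Q).PosDef := by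
    simpa [hQt] using
      hR.conjTranspose_mul_mul_same (mulVec_injective_iff_isUnit.2 hQ.isUnit)
  obtain ⟨c, hc, hcQ⟩ := hQRQ.exists_pos_smul_le hQ.isHermitian
  refine ⟨c, hc, fun X => ?_⟩
  simpa [Matrix.mul_assoc, trace_smul] using
    trace_transpose_mul_mul_le_of_le hcQ X

end Real

end Matrix

section Deriv

variable {𝕜 : Type*} [NontriviallyNormedField 𝕜] {l m n : Type*} {t : 𝕜}

theorem hasDerivAt_matrix [Fintype n] {A : 𝕜 → Matrix m n 𝕜} {A' : Matrix m n 𝕜} :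
    HasDerivAt A A' t ↔ ∀ i j, HasDerivAt (fun s => A s i j) (A' i j) t :=
  hasDerivAt_pi.trans (forall_congr' fun _ => hasDerivAt_pi)

theorem HasDerivAt.matrix_transpose [Fintype m] [Fintype n] {A : 𝕜 → Matrix m n 𝕜}
    {A' : Matrix m n 𝕜} (hA : HasDerivAt A A' t) : HasDerivAt (fun s => (A s)ᵀ) A'ᵀ t :=
  hasDerivAt_matrix.2 fun i j => hasDerivAt_matrix.1 hA j i

theorem HasDerivAt.matrix_mul [Fintype m] [Fintype n] {A : 𝕜 → Matrix l m 𝕜}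
    {B : 𝕜 → Matrix m n 𝕜} {A' : Matrix l m 𝕜} {B' : Matrix m n 𝕜} (hA : HasDerivAt A A' t)
    (hB : HasDerivAt B B' t) :
    HasDerivAt (fun s => A s * B s) (A' * B t + A t * B') t := by
  refine hasDerivAt_matrix.2 fun i j => ?_
  simp only [Matrix.add_apply, mul_apply, ← Finset.sum_add_distrib]
  exact HasDerivAt.fun_sum fun k _ =>
    (hasDerivAt_matrix.1 hA i k).fun_mul (hasDerivAt_matrix.1 hB k j)

theorem HasDerivAt.matrix_trace [Fintype n] {A : 𝕜 → Matrix n n 𝕜} {A' : Matrix n n 𝕜}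
    (hA : HasDerivAt A A' t) : HasDerivAt (fun s => (A s).trace) A'.trace t :=
  HasDerivAt.fun_sum fun i _ => hasDerivAt_matrix.1 hA i i

end Deriv

theorem hasDerivAt_trace_transpose_mul_mul_of_skew {n : Type*} [Fintype n]
    {W R Q : Matrix n n ℝ} (hW : Wᵀ = -W) (hQ : Qᵀ = Q) {Φ : ℝ → Matrix n n ℝ} {t : ℝ}
    (hΦ : HasDerivAt Φ ((W - R) * Q * Φ t) t) :
    HasDerivAt (fun s => ((Φ s)ᵀ * Q * Φ s).trace)
      (-(2 * ((Φ t)ᵀ * Q * R * Q * Φ t).trace)) t := by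
  refine ((hΦ.matrix_transpose.matrix_mul (hasDerivAt_const t Q)).matrix_mul
    hΦ).matrix_trace.congr_deriv ?_
  set D := (W - R) * Q * Φ t
  have hsymm : (Dᵀ * Q * Φ t).trace = ((Φ t)ᵀ * Q * D).trace := by
    rw [← trace_transpose]
    simp [transpose_mul, hQ, Matrix.mul_assoc]
  have hskew : ((Φ t)ᵀ * Q * W * Q * Φ t).trace = 0 := by
    simpa [transpose_mul, hQ, Matrix.mul_assoc] using
      trace_transpose_mul_mul_eq_zero_of_transpose_eq_neg hW (Q * Φ t)
  have hsplit : (Φ t)ᵀ * Q * D = (Φ t)ᵀ * Q * W * Q * Φ t - (Φ t)ᵀ * Q * R * Q * Φ t := by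
    simp only [D]
    noncomm_ring
  simp only [Matrix.mul_zero, add_zero, trace_add, hsymm, hsplit, trace_sub, hskew]
  ring

theorem le_exp_neg_mul_mul_of_hasDerivAt_le {f f' : ℝ → ℝ} {c : ℝ}
    (hf : ∀ t ≥ 0, HasDerivAt f (f' t) t) (hf' : ∀ t ≥ 0, f' t ≤ -c * f t) {t : ℝ}
    (ht : 0 ≤ t) : f t ≤ Real.exp (-c * t) * f 0 := by
  set g := fun s => Real.exp (c * s) * f s
  have hg : ∀ s ≥ 0, HasDerivAt g (Real.exp (c * s) * (c * f s + f' s)) s := fun s hs => by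
    refine (((hasDerivAt_id s).const_mul c).exp.fun_mul (hf s hs)).congr_deriv ?_
    simp only [id, mul_one]
    ring
  have hanti : AntitoneOn g (Set.Ici 0) := by
    refine antitoneOn_of_hasDerivWithinAt_nonpos
      (f' := fun s => Real.exp (c * s) * (c * f s + f' s)) (convex_Ici 0)
      (fun s hs => (hg s hs).continuousAt.continuousWithinAt) ?_ ?_ <;> rw [interior_Ici]
    · exact fun s hs => (hg s hs.le).hasDerivWithinAt
    · exact fun s hs =>
        mul_nonpos_of_nonneg_of_nonpos (Real.exp_pos _).le (by linarith [hf' s hs.le])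
  have hgt : Real.exp (c * t) * f t ≤ f 0 := by
    simpa [g] using hanti Set.self_mem_Ici ht ht
  calc f t = Real.exp (-c * t) * (Real.exp (c * t) * f t) := by
        rw [← mul_assoc, ← Real.exp_add]; simp
    _ ≤ Real.exp (-c * t) * f 0 := mul_le_mul_of_nonneg_left hgt (Real.exp_pos _).le

theorem tendsto_nhds_zero_of_norm_sq_le_mul_exp {E : Type*} [SeminormedAddCommGroup E]
    {f : ℝ → E} {K c : ℝ} (hc : 0 < c) (hf : ∀ t ≥ 0, ‖f t‖ ^ 2 ≤ K * Real.exp (-c * t)) :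
    Tendsto f atTop (𝓝 0) := by
  have hexp : Tendsto (fun t => √(K * Real.exp (-c * t))) atTop (𝓝 0) := by
    have := ((Real.tendsto_exp_neg_atTop_nhds_zero.comp
      (tendsto_id.const_mul_atTop hc)).const_mul K).sqrt
    simpa [Function.comp_def, neg_mul] using this
  refine squeeze_zero_norm' ?_ hexp
  filter_upwards [eventually_ge_atTop 0] with t ht using Real.le_sqrt_of_sq_le (hf t ht)

theorem norm_le_sqrt_of_norm_sq_le_mul_exp {E : Type*} [SeminormedAddCommGroup E]
    {f : ℝ → E} {K c : ℝ} (hc : 0 ≤ c) (hf : ∀ t ≥ 0, ‖f t‖ ^ 2 ≤ K * Real.exp (-c * t))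
    {t : ℝ} (ht : 0 ≤ t) : ‖f t‖ ≤ √K := by
  have hK : 0 ≤ K := by simpa using (sq_nonneg _).trans (hf 0 le_rfl)
  refine Real.le_sqrt_of_sq_le ((hf t ht).trans (mul_le_of_le_one_right hK ?_))
  exact Real.exp_le_one_iff.2 (by nlinarith)

theorem transition_matrix_exponential_decay_general {n m : ℕ}
    (J₀ : Matrix (Fin n) (Fin n) ℝ) (J : Fin m → Matrix (Fin n) (Fin n) ℝ)
    (R Q : Matrix (Fin n) (Fin n) ℝ)
    (hJ₀ : J₀ᵀ = -J₀) (hJ : ∀ i, (J i)ᵀ = -(J i))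
    (hR : R.PosDef) (hQ : Q.PosDef)
    (u : ℝ → Fin m → ℝ)
    (Φ : ℝ → Matrix (Fin n) (Fin n) ℝ)
    (hΦ : ∀ t ≥ (0:ℝ), HasDerivAt Φ ((J₀ + ∑ i, u t i • J i - R) * Q * Φ t) t)
    (U : ℝ → ℝ) (hU : ∀ t, U t = (1/2) * ((Φ t)ᵀ * Q * Φ t).trace) :
    (∀ t ≥ (0:ℝ), HasDerivAt U (-((Φ t)ᵀ * Q * R * Q * Φ t).trace) t)
    ∧ (∃ c > (0:ℝ),
        (∀ t ≥ (0:ℝ), -((Φ t)ᵀ * Q * R * Q * Φ t).trace ≤ -c * U t)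
        ∧ (∀ t ≥ (0:ℝ),
            ((Φ t)ᵀ * Q * Φ t).trace ≤ Real.exp (-c * t) * ((Φ 0)ᵀ * Q * Φ 0).trace))
    ∧ Filter.Tendsto Φ Filter.atTop (nhds 0)
    ∧ (∃ M : ℝ, ∀ t ≥ (0:ℝ), ‖Φ t‖ ≤ M) := by
  have hQt : Qᵀ = Q := by simpa using hQ.isHermitian.eq
  have hW : ∀ t, (J₀ + ∑ i, u t i • J i)ᵀ = -(J₀ + ∑ i, u t i • J i) := fun t => by
    simp only [transpose_add, transpose_sum, transpose_smul, hJ₀, hJ, smul_neg,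
      Finset.sum_neg_distrib, neg_add]
  have hV : ∀ t ≥ (0:ℝ), HasDerivAt (fun s => ((Φ s)ᵀ * Q * Φ s).trace)
      (-(2 * ((Φ t)ᵀ * Q * R * Q * Φ t).trace)) t :=
    fun t ht => hasDerivAt_trace_transpose_mul_mul_of_skew (hW t) hQt (hΦ t ht)
  obtain ⟨c, hc, hdiss⟩ := hR.exists_pos_mul_trace_le_trace_mul_mul hQ (m := Fin n)
  have hdecay : ∀ t ≥ (0:ℝ), ((Φ t)ᵀ * Q * Φ t).trace ≤
      Real.exp (-(2 * c) * t) * ((Φ 0)ᵀ * Q * Φ 0).trace :=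
    fun t ht => le_exp_neg_mul_mul_of_hasDerivAt_le hV (fun s _ => by linarith [hdiss (Φ s)]) ht
  obtain ⟨r, hr, hnorm⟩ := hQ.exists_pos_mul_norm_sq_le_trace (m := Fin n)
  have hΦsq : ∀ t ≥ (0:ℝ),
      ‖Φ t‖ ^ 2 ≤ ((Φ 0)ᵀ * Q * Φ 0).trace / r * Real.exp (-(2 * c) * t) := fun t ht => by
    rw [div_mul_eq_mul_div, le_div_iff₀ hr]
    linarith [hnorm (Φ t), hdecay t ht]
  refine ⟨fun t ht => ?_, ⟨2 * c, by positivity, fun t _ => ?_, hdecay⟩,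
    tendsto_nhds_zero_of_norm_sq_le_mul_exp (by positivity) hΦsq,
    ⟨_, fun t ht => norm_le_sqrt_of_norm_sq_le_mul_exp (by positivity) hΦsq ht⟩⟩
  · rw [show U = fun s => 1 / 2 * ((Φ s)ᵀ * Q * Φ s).trace from funext hU]
    exact ((hV t ht).const_mul (1 / 2)).congr_deriv (by ring)
  · rw [hU]
    linarith [hdiss (Φ t)]

/-- Exponential decay of the state transition matrix. For
`Φ̇ = (J₀ + Σ Jᵢuᵢ(t) − R)QΦ`, the function `U = ½tr(ΦᵀQΦ)` satisfies
`U′ = −tr(ΦᵀQRQΦ)` and there is `c > 0` (depending only on `Q` and `R`) with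
`U′ ≤ −cU`, hence `tr(Φ(t)ᵀQΦ(t)) ≤ e^{−ct}tr(Φ(0)ᵀQΦ(0))`; in particular
`Φ(t) → 0` and `Φ` is bounded. -/
theorem transition_matrix_exponential_decay {n m : ℕ}
    (J₀ : Matrix (Fin n) (Fin n) ℝ) (J : Fin m → Matrix (Fin n) (Fin n) ℝ)
    (R Q : Matrix (Fin n) (Fin n) ℝ)
    (hJ₀ : J₀ᵀ = -J₀) (hJ : ∀ i, (J i)ᵀ = -(J i))
    (hR : R.PosDef) (hQ : Q.PosDef)
    (u : ℝ → Fin m → ℝ) (hu : Continuous u)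
    (Φ : ℝ → Matrix (Fin n) (Fin n) ℝ)
    (hΦ : ∀ t ≥ (0:ℝ), HasDerivAt Φ ((J₀ + ∑ i, u t i • J i - R) * Q * Φ t) t)
    (U : ℝ → ℝ) (hU : ∀ t, U t = (1/2) * ((Φ t)ᵀ * Q * Φ t).trace) :
    (∀ t ≥ (0:ℝ), HasDerivAt U (-((Φ t)ᵀ * Q * R * Q * Φ t).trace) t)
    ∧ (∃ c > (0:ℝ),
        (∀ t ≥ (0:ℝ), -((Φ t)ᵀ * Q * R * Q * Φ t).trace ≤ -c * U t)
        ∧ (∀ t ≥ (0:ℝ),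
            ((Φ t)ᵀ * Q * Φ t).trace ≤ Real.exp (-c * t) * ((Φ 0)ᵀ * Q * Φ 0).trace))
    ∧ Filter.Tendsto Φ Filter.atTop (nhds 0)
    ∧ (∃ M : ℝ, ∀ t ≥ (0:ℝ), ‖Φ t‖ ≤ M) :=
  transition_matrix_exponential_decay_general J₀ J R Q hJ₀ hJ hR hQ u Φ hΦ U hU
end
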